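/- arXiv:math/0602468 — 2 statements merged into one kernel-verified Lean document; each statement's English description precedes it below -/
import Mathlib

section
/- Let A, B : [0,1] → ℝ be continuous. Suppose there exist real numbers a and b such that the function t ↦ a·A(t) + b·B(t) is not identically zero on [0,1] and does not change sign on [0,1]. Then every periodic orbit γ of the Abel equation x' = A(t)x³ + B(t)x² with γ(0) ≠ 0 is hyperbolic, i.e. ∫₀¹ (3A(t)γ(t)² + 2B(t)γ(t)) dt ≠ 0. -/
/-- `γ : ℝ → ℝ` is a solution of the Abel equation `x' = A(t)x³ + B(t)x²` on `[0,1]`. -/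
def IsAbelSolution (A B : ℝ → ℝ) (γ : ℝ → ℝ) : Prop :=
  ∀ t ∈ Set.Icc (0:ℝ) 1,
    HasDerivWithinAt γ (A t * γ t ^ 3 + B t * γ t ^ 2) (Set.Icc (0:ℝ) 1) t

/-- A periodic orbit of the Abel equation: a solution on `[0,1]` with `γ 0 = γ 1`. -/
def IsPeriodicOrbit (A B : ℝ → ℝ) (γ : ℝ → ℝ) : Prop :=
  IsAbelSolution A B γ ∧ γ 0 = γ 1

/-- A periodic orbit is hyperbolic iff `∫₀¹ (3A(t)γ(t)² + 2B(t)γ(t)) dt ≠ 0`. -/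
def IsHyperbolic (A B : ℝ → ℝ) (γ : ℝ → ℝ) : Prop :=
  (∫ t in (0:ℝ)..1, (3 * A t * γ t ^ 2 + 2 * B t * γ t)) ≠ 0

/-!
Put `f = a A + b B` and, replacing `(a, b)` by `(-a, -b)` if necessary, assume `f ≥ 0`.
Along a solution `γ`, the function `y = γ² (a - b γ)` solves the linear equation
`y' = λ y - γ⁴ f`, where `λ = 3 A γ² + 2 B γ` is the integrand of the hyperbolicity integral.
Variation of constants over one period, using `y 1 = y 0`, gives
`y 0 (exp (-∫₀¹ λ) - 1) = -∫₀¹ γ⁴ f exp (-∫₀ᵗ λ) dt`. The right-hand side is negative because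
`γ` vanishes nowhere (it solves the linear equation `γ' = (A γ² + B γ) γ`) and `f ≥ 0` is not
identically zero, so `∫₀¹ λ ≠ 0`.
-/

open Set Real

section LinearODE

variable {a b : ℝ} {c r y : ℝ → ℝ}

theorem hasDerivWithinAt_integral_Icc (hc : ContinuousOn c (Icc a b)) {t : ℝ} (ht : t ∈ Icc a b) :
    HasDerivWithinAt (fun u => ∫ s in a..u, c s) (c t) (Icc a b) t := by
  -- provides the `FTCFilter` instance for `𝓝[Icc a b] t`
  have : Fact (t ∈ Icc a b) := ⟨ht⟩
  refine intervalIntegral.integral_hasDerivWithinAt_right ?_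
    (hc.stronglyMeasurableAtFilter_nhdsWithin measurableSet_Icc t) (hc t ht)
  exact (hc.mono (uIcc_subset_Icc (left_mem_Icc.2 (ht.1.trans ht.2)) ht)).intervalIntegrable

theorem integral_mul_exp_neg_integral_eq_sub (hab : a ≤ b) (hc : ContinuousOn c (Icc a b))
    (hr : ContinuousOn r (Icc a b))
    (hy : ∀ t ∈ Icc a b, HasDerivWithinAt y (c t * y t + r t) (Icc a b) t) :
    ∫ t in a..b, r t * exp (-∫ s in a..t, c s) = y b * exp (-∫ s in a..b, c s) - y a := by
  set G := fun u => ∫ s in a..u, c s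
  have hG : ∀ t ∈ Icc a b, HasDerivWithinAt G (c t) (Icc a b) t :=
    fun t ht => hasDerivWithinAt_integral_Icc hc ht
  have hk : ∀ t ∈ Icc a b,
      HasDerivWithinAt (fun u => y u * exp (-G u)) (r t * exp (-G t)) (Icc a b) t := by
    intro t ht
    refine ((hy t ht).mul (hG t ht).neg.exp).congr_deriv ?_
    simp only [Pi.neg_apply]
    ring
  have hGc : ContinuousOn G (Icc a b) := fun t ht => (hG t ht).continuousWithinAt
  rw [intervalIntegral.integral_eq_sub_of_hasDerivAt_of_le hab
    (fun t ht => (hk t ht).continuousWithinAt)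
    (fun t ht => (hk t (Ioo_subset_Icc_self ht)).hasDerivAt (Icc_mem_nhds ht.1 ht.2))
    ((hr.mul hGc.neg.rexp).intervalIntegrable_of_Icc hab)]
  simp [G]

theorem ne_zero_of_hasDerivWithinAt_mul_self (hc : ContinuousOn c (Icc a b))
    (hy : ∀ t ∈ Icc a b, HasDerivWithinAt y (c t * y t) (Icc a b) t) (ha : y a ≠ 0) :
    ∀ t ∈ Icc a b, y t ≠ 0 := by
  intro t ht hyt
  have hsub : Icc a t ⊆ Icc a b := Icc_subset_Icc_right ht.2
  have h := integral_mul_exp_neg_integral_eq_sub (r := 0) ht.1 (hc.mono hsub) continuousOn_const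
    (fun s hs => by simpa using (hy s (hsub hs)).mono hsub)
  exact ha (by simpa [hyt] using h)

end LinearODE

namespace IsAbelSolution

variable {A B γ : ℝ → ℝ}

theorem continuousOn (hγ : IsAbelSolution A B γ) : ContinuousOn γ (Icc 0 1) :=
  fun t ht => (hγ t ht).continuousWithinAt

theorem ne_zero (hγ : IsAbelSolution A B γ) (hA : ContinuousOn A (Icc 0 1))
    (hB : ContinuousOn B (Icc 0 1)) (h0 : γ 0 ≠ 0) : ∀ t ∈ Icc (0:ℝ) 1, γ t ≠ 0 := by
  have hγc := hγ.continuousOn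
  refine ne_zero_of_hasDerivWithinAt_mul_self (c := fun t => A t * γ t ^ 2 + B t * γ t)
    (by fun_prop) (fun t ht => ?_) h0
  refine (hγ t ht).congr_deriv ?_
  ring

theorem hasDerivWithinAt_sq_mul_sub (hγ : IsAbelSolution A B γ) (a b : ℝ) {t : ℝ}
    (ht : t ∈ Icc (0:ℝ) 1) :
    HasDerivWithinAt (fun s => γ s ^ 2 * (a - b * γ s))
      ((3 * A t * γ t ^ 2 + 2 * B t * γ t) * (γ t ^ 2 * (a - b * γ t))
        + -(γ t ^ 4 * (a * A t + b * B t))) (Icc 0 1) t := by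
  refine (((hγ t ht).pow 2).mul (((hγ t ht).const_mul b).const_sub a)).congr_deriv ?_
  simp only [Pi.pow_apply]
  ring

end IsAbelSolution

theorem IsPeriodicOrbit.isHyperbolic_of_nonneg {A B γ : ℝ → ℝ} {a b t₀ : ℝ}
    (hA : ContinuousOn A (Icc 0 1)) (hB : ContinuousOn B (Icc 0 1))
    (hγ : IsPeriodicOrbit A B γ) (h0 : γ 0 ≠ 0)
    (hf : ∀ t ∈ Icc (0:ℝ) 1, 0 ≤ a * A t + b * B t)
    (ht₀ : t₀ ∈ Icc (0:ℝ) 1) (hft₀ : 0 < a * A t₀ + b * B t₀) :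
    IsHyperbolic A B γ := by
  obtain ⟨hsol, hper⟩ := hγ
  have hγc := hsol.continuousOn
  have hΛc : ContinuousOn (fun t => 3 * A t * γ t ^ 2 + 2 * B t * γ t) (Icc 0 1) := by fun_prop
  set E := fun t => exp (-∫ s in (0:ℝ)..t, (3 * A s * γ s ^ 2 + 2 * B s * γ s))
  have hEc : ContinuousOn E (Icc 0 1) := fun t ht =>
    (hasDerivWithinAt_integral_Icc hΛc ht).continuousWithinAt.neg.rexp
  have hvar := integral_mul_exp_neg_integral_eq_sub zero_le_one hΛc (by fun_prop)
    (fun t ht => hsol.hasDerivWithinAt_sq_mul_sub a b ht)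
  have hpos : 0 < ∫ t in (0:ℝ)..1, γ t ^ 4 * (a * A t + b * B t) * E t := by
    refine intervalIntegral.integral_pos zero_lt_one (by fun_prop)
      (fun t ht => by have := hf t (Ioc_subset_Icc_self ht); positivity) ⟨t₀, ht₀, ?_⟩
    have := hsol.ne_zero hA hB h0 t₀ ht₀
    positivity
  intro hΛ
  simp only [hΛ, neg_zero, exp_zero, mul_one, ← hper, sub_self, neg_mul,
    intervalIntegral.integral_neg, neg_eq_zero] at hvar
  exact hpos.ne' hvar

theorem abel_nonzero_periodic_orbit_hyperbolic
    (A B : ℝ → ℝ)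
    (hA : ContinuousOn A (Set.Icc 0 1)) (hB : ContinuousOn B (Set.Icc 0 1))
    (a b : ℝ)
    (h_not_ident_zero : ¬ ∀ t ∈ Set.Icc (0:ℝ) 1, a * A t + b * B t = 0)
    (h_sign : (∀ t ∈ Set.Icc (0:ℝ) 1, 0 ≤ a * A t + b * B t) ∨
              (∀ t ∈ Set.Icc (0:ℝ) 1, a * A t + b * B t ≤ 0))
    (γ : ℝ → ℝ)
    (hγ : IsPeriodicOrbit A B γ) (hn : γ 0 ≠ 0) :
    IsHyperbolic A B γ := by
  obtain ⟨t₀, ht₀, hft₀⟩ := not_forall₂.mp h_not_ident_zero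
  rcases h_sign with hf | hf
  · exact hγ.isHyperbolic_of_nonneg hA hB hn hf ht₀ ((hf t₀ ht₀).lt_of_ne' hft₀)
  · refine hγ.isHyperbolic_of_nonneg (a := -a) (b := -b) hA hB hn (fun t ht => ?_) ht₀ ?_
    · linarith [hf t ht]
    · linarith [(hf t₀ ht₀).lt_of_ne hft₀]
end

section
/- Let A, B : [0,1] → ℝ be continuous. If either A is not identically zero and does not change sign on [0,1], or B is not identically zero and does not change sign on [0,1], then the Abel equation x' = A(t)x³ + B(t)x² has at most one periodic orbit with nonzero initial condition, and every periodic orbit γ with γ(0) ≠ 0 is hyperbolic. -/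
/-- `F` is not identically zero and does not change sign on `[0,1]`. -/
def GoodSign (F : ℝ → ℝ) : Prop :=
  (¬ ∀ t ∈ Set.Icc (0:ℝ) 1, F t = 0) ∧
  ((∀ t ∈ Set.Icc (0:ℝ) 1, 0 ≤ F t) ∨ (∀ t ∈ Set.Icc (0:ℝ) 1, F t ≤ 0))


/-!
Two solutions that agree at one time agree from then on (the difference solves a linear equation
with bounded coefficient), and periodicity carries this back to `t = 0`. So a periodic orbit with
`γ 0 ≠ 0` never vanishes, and two distinct ones never meet. Along such an orbit `log |γ|`, `-1/γ`
and `-1/(2γ²)` are periodic, whence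
`∫ (Aγ² + Bγ) = ∫ (Aγ + B) = ∫ (A + B/γ) = 0`.
For two distinct orbits the last two identities give `∫ A (γ₁ - γ₂) = 0` and
`∫ B (1/γ₁ - 1/γ₂) = 0`; the second factors have a fixed sign, so neither integral vanishes when
`A`, resp. `B`, has a sign and is not identically zero. Likewise the hyperbolicity integral
`∫ (3Aγ² + 2Bγ)` equals both `∫ Aγ²` and `-∫ Bγ`.
-/

open Set

section Analysis

variable {a b : ℝ}

theorem eqOn_zero_of_hasDerivWithinAt_mul {f φ : ℝ → ℝ}
    (hφ : ContinuousOn φ (Icc a b)) (hf : ContinuousOn f (Icc a b))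
    (hf' : ∀ t ∈ Ico a b, HasDerivWithinAt f (φ t * f t) (Ici t) t) (ha : f a = 0) :
    EqOn f 0 (Icc a b) := by
  obtain ⟨C, hC⟩ := isCompact_Icc.exists_bound_of_continuousOn hφ
  have hlip : ∀ t ∈ Ico a b, LipschitzOnWith C.toNNReal (φ t * ·) univ := fun t ht ↦
    ((lipschitzWith_smul (φ t)).weaken <| by
      rw [← NNReal.coe_le_coe, coe_nnnorm]
      exact (hC t (Ico_subset_Icc_self ht)).trans (Real.le_coe_toNNReal C)).lipschitzOnWith
  refine ODE_solution_unique_of_mem_Icc_right hlip hf hf' (fun _ _ ↦ mem_univ _)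
    continuousOn_const (fun t _ ↦ ?_) (fun _ _ ↦ mem_univ _) ha
  rw [Pi.zero_apply, mul_zero]
  exact hasDerivWithinAt_const t (Ici t) 0

theorem IsPreconnected.forall_pos_or_forall_neg {X : Type*} [TopologicalSpace X] {s : Set X}
    {g : X → ℝ} (hs : IsPreconnected s) (hg : ContinuousOn g s) (hne : ∀ x ∈ s, g x ≠ 0) :
    (∀ x ∈ s, 0 < g x) ∨ (∀ x ∈ s, g x < 0) := by
  by_contra! ⟨⟨x, hx, hgx⟩, ⟨y, hy, hgy⟩⟩
  obtain ⟨z, hz, hgz⟩ := hs.intermediate_value hx hy hg ⟨hgx, hgy⟩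
  exact hne z hz hgz

theorem integral_ne_zero_of_nonneg_or_nonpos {f : ℝ → ℝ} (hab : a < b)
    (hf : ContinuousOn f (Icc a b))
    (hsign : (∀ t ∈ Icc a b, 0 ≤ f t) ∨ (∀ t ∈ Icc a b, f t ≤ 0))
    {c : ℝ} (hc : c ∈ Icc a b) (hfc : f c ≠ 0) :
    ∫ t in a..b, f t ≠ 0 := by
  rcases hsign with hpos | hneg
  · exact (intervalIntegral.integral_pos hab hf (fun t ht ↦ hpos t (Ioc_subset_Icc_self ht))
      ⟨c, hc, (hpos c hc).lt_of_ne' hfc⟩).ne'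
  · rw [← neg_ne_zero, ← intervalIntegral.integral_neg]
    exact (intervalIntegral.integral_pos hab hf.neg
      (fun t ht ↦ neg_nonneg.2 (hneg t (Ioc_subset_Icc_self ht)))
      ⟨c, hc, neg_pos.2 ((hneg c hc).lt_of_ne hfc)⟩).ne'

theorem integral_mul_ne_zero {f g : ℝ → ℝ} (hab : a < b)
    (hf : ContinuousOn f (Icc a b)) (hg : ContinuousOn g (Icc a b))
    (hf0 : ¬ ∀ t ∈ Icc a b, f t = 0)
    (hsign : (∀ t ∈ Icc a b, 0 ≤ f t) ∨ (∀ t ∈ Icc a b, f t ≤ 0))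
    (hg0 : ∀ t ∈ Icc a b, g t ≠ 0) :
    ∫ t in a..b, f t * g t ≠ 0 := by
  push Not at hf0
  obtain ⟨c, hc, hfc⟩ := hf0
  refine integral_ne_zero_of_nonneg_or_nonpos hab (hf.mul hg) ?_ hc (mul_ne_zero hfc (hg0 c hc))
  rcases isPreconnected_Icc.forall_pos_or_forall_neg hg hg0 with hgp | hgn <;>
    rcases hsign with hfp | hfn
  · exact .inl fun t ht ↦ mul_nonneg (hfp t ht) (hgp t ht).le
  · exact .inr fun t ht ↦ mul_nonpos_of_nonpos_of_nonneg (hfn t ht) (hgp t ht).le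
  · exact .inr fun t ht ↦ mul_nonpos_of_nonneg_of_nonpos (hfp t ht) (hgn t ht).le
  · exact .inl fun t ht ↦ mul_nonneg_of_nonpos_of_nonpos (hfn t ht) (hgn t ht).le

theorem integral_eq_zero_of_hasDerivAt_of_eq {g g' : ℝ → ℝ} (hab : a ≤ b)
    (hg : ContinuousOn g (Icc a b)) (hderiv : ∀ t ∈ Ioo a b, HasDerivAt g (g' t) t)
    (hg' : ContinuousOn g' (Icc a b)) (hper : g a = g b) :
    ∫ t in a..b, g' t = 0 := by
  rw [intervalIntegral.integral_eq_sub_of_hasDerivAt_of_le hab hg hderiv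
    (hg'.intervalIntegrable_of_Icc hab), hper, sub_self]

end Analysis

section Abel

variable {A B γ γ₁ γ₂ : ℝ → ℝ}

theorem IsAbelSolution.continuousOn_s15 (h : IsAbelSolution A B γ) : ContinuousOn γ (Icc 0 1) :=
  fun t ht ↦ (h t ht).continuousWithinAt

theorem IsAbelSolution.hasDerivAt (h : IsAbelSolution A B γ) {t : ℝ} (ht : t ∈ Ioo 0 1) :
    HasDerivAt γ (A t * γ t ^ 3 + B t * γ t ^ 2) t :=
  (h t (Ioo_subset_Icc_self ht)).hasDerivAt (Icc_mem_nhds ht.1 ht.2)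

theorem IsAbelSolution.eqOn_of_eq (hA : ContinuousOn A (Icc 0 1))
    (hB : ContinuousOn B (Icc 0 1)) (h₁ : IsAbelSolution A B γ₁) (h₂ : IsAbelSolution A B γ₂)
    {s : ℝ} (hs : s ∈ Icc (0 : ℝ) 1) (heq : γ₁ s = γ₂ s) : EqOn γ₁ γ₂ (Icc s 1) := by
  have hsub : Icc s 1 ⊆ Icc 0 1 := Icc_subset_Icc_left hs.1
  have hc₁ := h₁.continuousOn_s15
  have hc₂ := h₂.continuousOn_s15
  -- `γ₁ - γ₂` solves `u' = φ u`, as `x³ - y³` and `x² - y²` are divisible by `x - y`.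
  set φ : ℝ → ℝ := fun t ↦ A t * (γ₁ t ^ 2 + γ₁ t * γ₂ t + γ₂ t ^ 2) + B t * (γ₁ t + γ₂ t)
  have hφ : ContinuousOn φ (Icc 0 1) := by fun_prop
  have hzero := eqOn_zero_of_hasDerivWithinAt_mul (f := γ₁ - γ₂)
    (hφ.mono hsub) ((hc₁.sub hc₂).mono hsub) (fun t ht ↦ ?_) (sub_eq_zero.2 heq)
  · exact fun t ht ↦ sub_eq_zero.1 (hzero ht)
  have ht' : t ∈ Ico (0 : ℝ) 1 := ⟨hs.1.trans ht.1, ht.2⟩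
  have hd := (h₁ t (Ico_subset_Icc_self ht')).sub (h₂ t (Ico_subset_Icc_self ht'))
  exact (hd.mono_of_mem_nhdsWithin (Icc_mem_nhdsGE_of_mem ht')).congr_deriv
    (by simp only [φ, Pi.sub_apply]; ring)

theorem IsPeriodicOrbit.eqOn_of_eq (hA : ContinuousOn A (Icc 0 1))
    (hB : ContinuousOn B (Icc 0 1)) (h₁ : IsPeriodicOrbit A B γ₁) (h₂ : IsPeriodicOrbit A B γ₂)
    {s : ℝ} (hs : s ∈ Icc (0 : ℝ) 1) (heq : γ₁ s = γ₂ s) : EqOn γ₁ γ₂ (Icc 0 1) := by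
  have h₁₁ : γ₁ 1 = γ₂ 1 := h₁.1.eqOn_of_eq hA hB h₂.1 hs heq ⟨hs.2, le_rfl⟩
  have h₀₀ : γ₁ 0 = γ₂ 0 := by rw [h₁.2, h₂.2, h₁₁]
  exact h₁.1.eqOn_of_eq hA hB h₂.1 (left_mem_Icc.2 zero_le_one) h₀₀

theorem isPeriodicOrbit_zero (A B : ℝ → ℝ) : IsPeriodicOrbit A B 0 :=
  ⟨fun t _ ↦ (hasDerivWithinAt_zero t _).congr_deriv (by simp), rfl⟩

theorem IsPeriodicOrbit.ne_zero (hA : ContinuousOn A (Icc 0 1))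
    (hB : ContinuousOn B (Icc 0 1)) (h : IsPeriodicOrbit A B γ) (h0 : γ 0 ≠ 0) :
    ∀ t ∈ Icc (0 : ℝ) 1, γ t ≠ 0 := fun _ ht hz ↦
  h0 (h.eqOn_of_eq hA hB (isPeriodicOrbit_zero A B) ht hz (left_mem_Icc.2 zero_le_one))

section Integrals

variable (hA : ContinuousOn A (Icc 0 1)) (hB : ContinuousOn B (Icc 0 1))
  (h : IsPeriodicOrbit A B γ) (hγ : ∀ t ∈ Icc (0 : ℝ) 1, γ t ≠ 0)
include hA hB h hγ

theorem IsPeriodicOrbit.integral_deriv_log_eq_zero :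
    ∫ t in (0 : ℝ)..1, (A t * γ t ^ 2 + B t * γ t) = 0 := by
  have hc := h.1.continuousOn_s15
  refine integral_eq_zero_of_hasDerivAt_of_eq (g := fun t ↦ Real.log (γ t)) zero_le_one
    (hc.log hγ) (fun t ht ↦ ?_) (by fun_prop) (by rw [h.2])
  have hγt := hγ t (Ioo_subset_Icc_self ht)
  exact ((Real.hasDerivAt_log hγt).comp t (h.1.hasDerivAt ht)).congr_deriv (by field_simp)

theorem IsPeriodicOrbit.integral_deriv_inv_eq_zero :
    ∫ t in (0 : ℝ)..1, (A t * γ t + B t) = 0 := by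
  have hc := h.1.continuousOn_s15
  refine integral_eq_zero_of_hasDerivAt_of_eq (g := fun t ↦ -(γ t)⁻¹) zero_le_one
    (hc.inv₀ hγ).neg (fun t ht ↦ ?_) (by fun_prop) (by rw [h.2])
  have hγt := hγ t (Ioo_subset_Icc_self ht)
  exact ((h.1.hasDerivAt ht).inv hγt).neg.congr_deriv (by field_simp)

theorem IsPeriodicOrbit.integral_deriv_inv_sq_eq_zero :
    ∫ t in (0 : ℝ)..1, (A t + B t * (γ t)⁻¹) = 0 := by
  have hc := h.1.continuousOn_s15
  refine integral_eq_zero_of_hasDerivAt_of_eq (g := fun t ↦ -(γ t ^ 2)⁻¹ / 2) zero_le_one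
    (by fun_prop (disch := simp_all)) (fun t ht ↦ ?_) (by fun_prop (disch := assumption))
    (by rw [h.2])
  have hγt := hγ t (Ioo_subset_Icc_self ht)
  exact (((h.1.hasDerivAt ht).pow 2).inv (pow_ne_zero 2 hγt)).neg.div_const 2 |>.congr_deriv
    (by simp only [Pi.pow_apply]; field_simp; ring)

end Integrals

theorem IsPeriodicOrbit.eqOn_of_goodSign (hA : ContinuousOn A (Icc 0 1))
    (hB : ContinuousOn B (Icc 0 1)) (hAB : GoodSign A ∨ GoodSign B)
    (h₁ : IsPeriodicOrbit A B γ₁) (h₂ : IsPeriodicOrbit A B γ₂) (h₁0 : γ₁ 0 ≠ 0)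
    (h₂0 : γ₂ 0 ≠ 0) : EqOn γ₁ γ₂ (Icc 0 1) := by
  by_contra hne
  have hsep : ∀ t ∈ Icc (0 : ℝ) 1, γ₁ t ≠ γ₂ t := fun t ht heq ↦
    hne (h₁.eqOn_of_eq hA hB h₂ ht heq)
  have hγ₁ := h₁.ne_zero hA hB h₁0
  have hγ₂ := h₂.ne_zero hA hB h₂0
  have hc₁ := h₁.1.continuousOn_s15
  have hc₂ := h₂.1.continuousOn_s15
  rcases hAB with ⟨hA0, hAsign⟩ | ⟨hB0, hBsign⟩
  · refine integral_mul_ne_zero zero_lt_one hA (hc₁.sub hc₂) hA0 hAsign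
      (fun t ht ↦ sub_ne_zero.2 (hsep t ht)) ?_
    calc ∫ t in (0 : ℝ)..1, A t * (γ₁ t - γ₂ t)
        = (∫ t in (0 : ℝ)..1, (A t * γ₁ t + B t)) -
            ∫ t in (0 : ℝ)..1, (A t * γ₂ t + B t) := by
          rw [← intervalIntegral.integral_sub]
          · congr 1 with t
            ring
          all_goals exact ContinuousOn.intervalIntegrable_of_Icc zero_le_one (by fun_prop)
      _ = 0 := by
          rw [h₁.integral_deriv_inv_eq_zero hA hB hγ₁, h₂.integral_deriv_inv_eq_zero hA hB hγ₂,
            sub_self]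
  · refine integral_mul_ne_zero zero_lt_one hB ((hc₁.inv₀ hγ₁).sub (hc₂.inv₀ hγ₂)) hB0 hBsign
      (fun t ht ↦ sub_ne_zero.2 fun heq ↦ hsep t ht (inv_injective heq)) ?_
    calc ∫ t in (0 : ℝ)..1, B t * ((γ₁ t)⁻¹ - (γ₂ t)⁻¹)
        = (∫ t in (0 : ℝ)..1, (A t + B t * (γ₁ t)⁻¹)) -
            ∫ t in (0 : ℝ)..1, (A t + B t * (γ₂ t)⁻¹) := by
          rw [← intervalIntegral.integral_sub]
          · congr 1 with t
            ring
          all_goals refine ContinuousOn.intervalIntegrable_of_Icc zero_le_one ?_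
          all_goals fun_prop (disch := assumption)
      _ = 0 := by
          rw [h₁.integral_deriv_inv_sq_eq_zero hA hB hγ₁,
            h₂.integral_deriv_inv_sq_eq_zero hA hB hγ₂, sub_self]

theorem IsPeriodicOrbit.isHyperbolic_of_goodSign (hA : ContinuousOn A (Icc 0 1))
    (hB : ContinuousOn B (Icc 0 1)) (hAB : GoodSign A ∨ GoodSign B)
    (h : IsPeriodicOrbit A B γ) (h0 : γ 0 ≠ 0) : IsHyperbolic A B γ := by
  have hγ := h.ne_zero hA hB h0
  have hc := h.1.continuousOn_s15
  have hzero := h.integral_deriv_log_eq_zero hA hB hγ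
  unfold IsHyperbolic
  rcases hAB with ⟨hA0, hAsign⟩ | ⟨hB0, hBsign⟩
  · calc ∫ t in (0 : ℝ)..1, (3 * A t * γ t ^ 2 + 2 * B t * γ t)
        = (∫ t in (0 : ℝ)..1, A t * γ t ^ 2) +
            2 * ∫ t in (0 : ℝ)..1, (A t * γ t ^ 2 + B t * γ t) := by
          rw [← intervalIntegral.integral_const_mul, ← intervalIntegral.integral_add]
          · congr 1 with t
            ring
          all_goals exact ContinuousOn.intervalIntegrable_of_Icc zero_le_one (by fun_prop)
      _ = ∫ t in (0 : ℝ)..1, A t * γ t ^ 2 := by rw [hzero, mul_zero, add_zero]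
      _ ≠ 0 := integral_mul_ne_zero zero_lt_one hA (hc.pow 2) hA0 hAsign
          fun t ht ↦ pow_ne_zero 2 (hγ t ht)
  · calc ∫ t in (0 : ℝ)..1, (3 * A t * γ t ^ 2 + 2 * B t * γ t)
        = (∫ t in (0 : ℝ)..1, B t * -γ t) +
            3 * ∫ t in (0 : ℝ)..1, (A t * γ t ^ 2 + B t * γ t) := by
          rw [← intervalIntegral.integral_const_mul, ← intervalIntegral.integral_add]
          · congr 1 with t
            ring
          all_goals exact ContinuousOn.intervalIntegrable_of_Icc zero_le_one (by fun_prop)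
      _ = ∫ t in (0 : ℝ)..1, B t * -γ t := by rw [hzero, mul_zero, add_zero]
      _ ≠ 0 := integral_mul_ne_zero zero_lt_one hB hc.neg hB0 hBsign
          fun t ht ↦ neg_ne_zero.2 (hγ t ht)

end Abel

theorem abel_uniqueness_A_or_B_signed
    (A B : ℝ → ℝ)
    (hA : ContinuousOn A (Set.Icc 0 1)) (hB : ContinuousOn B (Set.Icc 0 1))
    (h : GoodSign A ∨ GoodSign B) :
    (∀ γ₁ γ₂ : ℝ → ℝ, IsPeriodicOrbit A B γ₁ → IsPeriodicOrbit A B γ₂ →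
      γ₁ 0 ≠ 0 → γ₂ 0 ≠ 0 → Set.EqOn γ₁ γ₂ (Set.Icc 0 1)) ∧
    (∀ γ : ℝ → ℝ, IsPeriodicOrbit A B γ → γ 0 ≠ 0 → IsHyperbolic A B γ) :=
  ⟨fun _ _ h₁ h₂ ↦ h₁.eqOn_of_goodSign hA hB h h₂,
    fun _ hγ ↦ hγ.isHyperbolic_of_goodSign hA hB h⟩
end
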